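/- arXiv:0910.0439 — 2 statements merged into one kernel-verified Lean document; each statement's English description precedes it below -/
import Mathlib

section
/- For every topological space X, the nowhere density number nwd(X) equals the open density number od(X) := min over nonempty open U of the density character d(U) of the subspace U. -/
open Set Cardinal

/-- The nowhere density number of a space `X`:
the least cardinality of a subset whose closure has nonempty interior. -/
noncomputable def nwdNumber (X : Type*) [TopologicalSpace X] : Cardinal :=
  sInf {c | ∃ A : Set X, (interior (closure A)).Nonempty ∧ c = #A}

/-- The open density number of a space `X`:
the least, over nonempty open `U`, of the density character of the
subspace `U` (least size of a subset of `U` whose closure contains `U`). -/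
noncomputable def odNumber (X : Type*) [TopologicalSpace X] : Cardinal :=
  sInf {c | ∃ U : Set X, IsOpen U ∧ U.Nonempty ∧
    c = sInf {d | ∃ A : Set X, A ⊆ U ∧ U ⊆ closure A ∧ d = #A}}

/-!
A set `A` whose closure has nonempty interior `U` meets `U` in a dense subset of `U`, so
`od(X) ≤ d(U) ≤ |A|`; conversely a dense subset of a nonempty open `U` has `U` inside the
interior of its closure, so `nwd(X) ≤ d(U)`. Thus every element of either set of cardinals
dominates an element of the other, which forces their infima to agree.
-/

section
variable {X : Type*} [TopologicalSpace X]

theorem IsOpen.subset_closure_inter_of_subset_closure {U A : Set X} (hU : IsOpen U)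
    (hUA : U ⊆ closure A) : U ⊆ closure (U ∩ A) :=
  fun _ hx ↦ hU.inter_closure ⟨hx, hUA hx⟩

theorem exists_subset_dense_mk_eq_sInf (U : Set X) :
    ∃ A ⊆ U, U ⊆ closure A ∧
      #A = sInf {d | ∃ B : Set X, B ⊆ U ∧ U ⊆ closure B ∧ d = #B} := by
  have hne : {d | ∃ B : Set X, B ⊆ U ∧ U ⊆ closure B ∧ d = #B}.Nonempty :=
    ⟨#U, U, subset_rfl, subset_closure, rfl⟩
  obtain ⟨A, hAU, hUA, hA⟩ := csInf_mem hne
  exact ⟨A, hAU, hUA, hA.symm⟩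

end

theorem nwdNumber_eq_odNumber_general (X : Type*) [TopologicalSpace X] :
    nwdNumber X = odNumber X := by
  refine csInf_eq_csInf_of_forall_exists_le ?_ ?_
  · rintro _ ⟨A, ⟨x, hx⟩, rfl⟩
    set U := interior (closure A)
    have hU_dense : U ⊆ closure (U ∩ A) :=
      isOpen_interior.subset_closure_inter_of_subset_closure interior_subset
    refine ⟨_, ⟨U, isOpen_interior, ⟨x, hx⟩, rfl⟩, ?_⟩
    calc sInf {d | ∃ B : Set X, B ⊆ U ∧ U ⊆ closure B ∧ d = #B}
        ≤ #(U ∩ A : Set X) := csInf_le' ⟨U ∩ A, inter_subset_left, hU_dense, rfl⟩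
      _ ≤ #A := mk_le_mk_of_subset inter_subset_right
  · rintro _ ⟨U, hU, ⟨x, hx⟩, rfl⟩
    obtain ⟨A, -, hUA, hA⟩ := exists_subset_dense_mk_eq_sInf U
    exact ⟨#A, ⟨A, ⟨x, interior_maximal hUA hU hx⟩, rfl⟩, hA.le⟩

/-- For every nonempty topological space, `nwd(X) = od(X)`. -/
theorem nwdNumber_eq_odNumber (X : Type*) [TopologicalSpace X] [Nonempty X] :
    nwdNumber X = odNumber X :=
  nwdNumber_eq_odNumber_general X
end

section
/- Let X be a topological space, n < ω, and suppose X admits a partition X = D_0 ∪ ... ∪ D_{n-1} into n pairwise disjoint dense subsets, each of which is hereditarily irresolvable (no nonempty subspace of D_k is resolvable). Then X is not (n+1)-resolvable. -/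
/-!
For each of the `n + 1` disjoint dense sets `E i`, the closed sets `closure (E i ∩ D k)` cover
the space, so their interiors have dense union; intersecting over `i` gives a point `x` lying,
for every `i`, in the interior of some `closure (E i ∩ D (f i))`. By pigeonhole `f i = f j = k`
for some `i ≠ j`, and near `x` the sets `E i ∩ D k` and `E j ∩ D k` are then disjoint and dense
in a nonempty subspace of `D k`, which is impossible.
-/

open Set

/-- A subset `D` of a space is hereditarily irresolvable if no nonempty
subspace of `D` admits two disjoint dense subsets. (Density of `A` in the
subspace `S` means `S ⊆ closure A`.) -/
def HereditarilyIrresolvable {X : Type*} [TopologicalSpace X] (D : Set X) : Prop :=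
  ∀ S ⊆ D, S.Nonempty →
    ¬ ∃ A B : Set X, A ⊆ S ∧ B ⊆ S ∧ Disjoint A B ∧ S ⊆ closure A ∧ S ⊆ closure B

section

variable {X ι : Type*} [TopologicalSpace X] [Finite ι]

theorem dense_iInter_of_isOpen_of_finite {f : ι → Set X} (ho : ∀ i, IsOpen (f i))
    (hd : ∀ i, Dense (f i)) : Dense (⋂ i, f i) :=
  sInter_range f ▸ (finite_range f).dense_sInter (forall_mem_range.2 ho) (forall_mem_range.2 hd)

theorem dense_iUnion_interior_of_closed_of_finite {f : ι → Set X} (hc : ∀ i, IsClosed (f i))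
    (hU : ⋃ i, f i = univ) : Dense (⋃ i, interior (f i)) := by
  have hgd : Dense (⋂ i, (frontier (f i))ᶜ) := by
    refine dense_iInter_of_isOpen_of_finite (fun i => isClosed_frontier.isOpen_compl) fun i => ?_
    rw [← interior_eq_empty_iff_dense_compl, interior_frontier (hc i)]
  refine hgd.mono fun x hx => ?_
  obtain ⟨i, hi⟩ := mem_iUnion.1 (hU ▸ mem_univ x)
  exact mem_iUnion.2 ⟨i, self_sdiff_frontier (f i) ▸ ⟨hi, mem_iInter.1 hx i⟩⟩

theorem Dense.dense_iUnion_interior_closure_inter {E : Set X} (hE : Dense E) {D : ι → Set X}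
    (hD : ⋃ k, D k = univ) : Dense (⋃ k, interior (closure (E ∩ D k))) := by
  refine dense_iUnion_interior_of_closed_of_finite (fun k => isClosed_closure) ?_
  rw [← hE.closure_eq, ← closure_iUnion_of_finite, ← inter_iUnion, hD, inter_univ]

end

theorem HereditarilyIrresolvable.disjoint_interior_closure_inter {X : Type*} [TopologicalSpace X]
    {D A B : Set X} (hD : HereditarilyIrresolvable D) (hAB : Disjoint A B) :
    Disjoint (interior (closure (A ∩ D))) (interior (closure (B ∩ D))) := by
  set V := interior (closure (A ∩ D)) ∩ interior (closure (B ∩ D))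
  have hV : IsOpen V := isOpen_interior.inter isOpen_interior
  rw [disjoint_iff_inter_eq_empty, ← not_nonempty_iff_eq_empty]
  intro hVne
  have hVA : V ⊆ closure (V ∩ (A ∩ D)) := fun x hx =>
    hV.inter_closure ⟨hx, interior_subset hx.1⟩
  have hVB : V ⊆ closure (V ∩ (B ∩ D)) := fun x hx =>
    hV.inter_closure ⟨hx, interior_subset hx.2⟩
  obtain ⟨x, hxV, hxD⟩ := mem_closure_iff.1 (hVA hVne.some_mem) V hV hVne.some_mem
  refine hD (V ∩ D) inter_subset_right ⟨x, hxV, hxD.2.2⟩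
    ⟨V ∩ (A ∩ D), V ∩ (B ∩ D), inter_subset_inter_right V inter_subset_right,
      inter_subset_inter_right V inter_subset_right,
      hAB.mono (fun y hy => hy.2.1) (fun y hy => hy.2.1),
      inter_subset_left.trans hVA, inter_subset_left.trans hVB⟩

theorem not_succ_resolvable_of_partition_heredIrresolvable_general
    {X : Type*} [TopologicalSpace X] [Nonempty X] (n : ℕ)
    (D : Fin n → Set X)
    (hcover : ⋃ k, D k = univ)
    (hhi : ∀ k, HereditarilyIrresolvable (D k)) :
    ¬ ∃ E : Fin (n + 1) → Set X,
      Pairwise (Function.onFun Disjoint E) ∧ ∀ i, Dense (E i) := by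
  rintro ⟨E, hEdisj, hEdense⟩
  have hW : Dense (⋂ i, ⋃ k, interior (closure (E i ∩ D k))) :=
    dense_iInter_of_isOpen_of_finite (fun i => isOpen_iUnion fun k => isOpen_interior)
      fun i => (hEdense i).dense_iUnion_interior_closure_inter hcover
  obtain ⟨x, hx⟩ := hW.nonempty
  choose f hf using fun i => mem_iUnion.1 (mem_iInter.1 hx i)
  obtain ⟨i, j, hij, hfij⟩ := Fintype.exists_ne_map_eq_of_card_lt f (by simp)
  exact ((hhi (f i)).disjoint_interior_closure_inter (hEdisj hij)).notMem_of_mem_left (hf i)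
    (hfij ▸ hf j)

/-- If `X` is partitioned into `n` pairwise disjoint dense, hereditarily
irresolvable subsets, then `X` is not `(n+1)`-resolvable. -/
theorem not_succ_resolvable_of_partition_heredIrresolvable
    {X : Type*} [TopologicalSpace X] [Nonempty X] (n : ℕ)
    (D : Fin n → Set X)
    (hcover : ⋃ k, D k = univ)
    (hdisj : Pairwise (Function.onFun Disjoint D))
    (hdense : ∀ k, Dense (D k))
    (hhi : ∀ k, HereditarilyIrresolvable (D k)) :
    ¬ ∃ E : Fin (n + 1) → Set X,
      Pairwise (Function.onFun Disjoint E) ∧ ∀ i, Dense (E i) :=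
  not_succ_resolvable_of_partition_heredIrresolvable_general n D hcover hhi
end
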